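/- Set S' = ℤ[G] ⊕ ℤ[Ω] (the last two direct summands of D'). The quotient map D' → T' restricts to a surjection (D')^H → (T')^H on H-invariants, and this map together with the projection (D')^H → (S')^H induce isomorphisms H²(G/H, (T')^H) ≅ H²(G/H, (D')^H) ≅ H²(G/H, (S')^H). -/

import Mathlib

namespace Normic

/-- For a `Γ`-set `α`, the permutation module of `M`-valued functions on `α`:
`Γ` acts by `(g • f) x = f (g⁻¹ • x)`.  For `M = ℤ` and a finite `Γ`-set `α` this is
the permutation lattice `ℤ[α]`. -/
instance funAction (Γ α M : Type*) [Group Γ] [MulAction Γ α] [AddCommGroup M] :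
    DistribMulAction Γ (α → M) where
  smul g f := fun x => f (g⁻¹ • x)
  one_smul f := by funext x; show f _ = f x; rw [inv_one, one_smul]
  mul_smul g h f := by funext x; show f _ = f _; rw [mul_inv_rev, mul_smul]
  smul_zero g := rfl
  smul_add g f₁ f₂ := rfl

lemma funAction_smul_apply {Γ α M : Type*} [Group Γ] [MulAction Γ α] [AddCommGroup M]
    (g : Γ) (f : α → M) (x : α) : (g • f) x = f (g⁻¹ • x) := rfl

section Cocycles

variable {Γ : Type*} [Group Γ] {M : Type*} [AddCommGroup M] [DistribMulAction Γ M]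

/-- Inhomogeneous 1-cocycles of `Γ` with values in `M`. -/
def IsOneCocycle (f : Γ → M) : Prop := ∀ g h : Γ, f (g * h) = g • f h + f g

/-- 1-coboundaries of `Γ` with values in `M`. -/
def IsOneCoboundary (f : Γ → M) : Prop := ∃ m : M, ∀ g : Γ, f g = g • m - m

/-- Inhomogeneous 2-cocycles of `Γ` with values in `M`. -/
def IsTwoCocycle (f : Γ → Γ → M) : Prop :=
  ∀ g h k : Γ, g • f h k - f (g * h) k + f g (h * k) - f g h = 0

/-- 2-coboundaries of `Γ` with values in `M`. -/
def IsTwoCoboundary (f : Γ → Γ → M) : Prop :=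
  ∃ a : Γ → M, ∀ g h : Γ, f g h = g • a h - a (g * h) + a g

end Cocycles

section Fixed

variable {Γ : Type*} [Group Γ] (N : Subgroup Γ)
variable (M : Type*) [AddCommGroup M] [DistribMulAction Γ M]

/-- The subgroup `M^N` of elements of `M` fixed by a subgroup `N` of `Γ`. -/
def fixedBy : AddSubgroup M where
  carrier := {m | ∀ γ ∈ N, γ • m = m}
  zero_mem' := fun γ _ => smul_zero γ
  add_mem' := by
    intro a b ha hb γ hγ
    rw [smul_add, ha γ hγ, hb γ hγ]
  neg_mem' := by
    intro a ha γ hγ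
    rw [smul_neg, ha γ hγ]

variable [N.Normal]

/-- When `N` is normal in `Γ`, the quotient `Γ/N` acts on the fixed points `M^N`. -/
instance fixedBySMul : SMul (Γ ⧸ N) (fixedBy N M) :=
  ⟨fun q m =>
    Quotient.liftOn' q
      (fun γ => (⟨γ • (m : M), by
        intro h hh
        have hconj : γ⁻¹ * h * γ ∈ N := by
          have := Subgroup.Normal.conj_mem ‹N.Normal› h hh γ⁻¹
          simpa using this
        calc h • γ • (m : M) = (h * γ) • (m : M) := (mul_smul _ _ _).symm
        _ = (γ * (γ⁻¹ * h * γ)) • (m : M) := by group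
        _ = γ • ((γ⁻¹ * h * γ) • (m : M)) := mul_smul _ _ _
        _ = γ • (m : M) := by rw [m.2 _ hconj]⟩ : fixedBy N M))
      (by
        intro γ γ' hrel
        have h : γ⁻¹ * γ' ∈ N := QuotientGroup.leftRel_apply.mp hrel
        apply Subtype.ext
        show γ • (m : M) = γ' • (m : M)
        calc γ • (m : M) = γ • ((γ⁻¹ * γ') • (m : M)) := by rw [m.2 _ h]
        _ = (γ * (γ⁻¹ * γ')) • (m : M) := (mul_smul _ _ _).symm
        _ = γ' • (m : M) := by group)⟩

lemma fixedBy_mk_smul (γ : Γ) (m : fixedBy N M) :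
    (((QuotientGroup.mk γ : Γ ⧸ N) • m : fixedBy N M) : M) = γ • (m : M) := rfl

/-- The induced action of the quotient group `Γ/N` on the fixed points `M^N`. -/
instance fixedByAction : DistribMulAction (Γ ⧸ N) (fixedBy N M) where
  one_smul m := by
    apply Subtype.ext
    show (1 : Γ) • (m : M) = (m : M)
    rw [one_smul]
  mul_smul q q' m := by
    induction q using QuotientGroup.induction_on with
    | H γ =>
    induction q' using QuotientGroup.induction_on with
    | H γ' =>
    apply Subtype.ext
    show (γ * γ') • (m : M) = γ • γ' • (m : M)
    rw [mul_smul]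
  smul_zero q := by
    induction q using QuotientGroup.induction_on with
    | H γ =>
    apply Subtype.ext
    show γ • (0 : M) = (0 : M)
    rw [smul_zero]
  smul_add q m m' := by
    induction q using QuotientGroup.induction_on with
    | H γ =>
    apply Subtype.ext
    show γ • ((m : M) + (m' : M)) = γ • (m : M) + γ • (m' : M)
    rw [smul_add]

end Fixed

section ContextA

variable (G : Type*) [Group G] [Fintype G] [DecidableEq G] (H : Subgroup G) (l : ℕ)

/-- `e' = gcd(n, m)`, where `n = #G` and `m = l·[G:H]` is the degree of `P(t)`. -/
noncomputable def ePrime : ℕ := Nat.gcd (Fintype.card G) (l * H.index)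

/-- The `G`-set `Ω` of all subsets of `Z_K = G` of cardinality `e'`, with `G` acting by
left translation of subsets. -/
def Om : Type _ := {s : Finset G // s.card = ePrime G H l}

instance : MulAction G (Om G H l) where
  smul g s := ⟨s.1.image (g * ·), by
    rw [Finset.card_image_of_injective _ (mul_right_injective g)]; exact s.2⟩
  one_smul s := Subtype.ext (by
    show Finset.image ((1 : G) * ·) s.1 = s.1
    simp)
  mul_smul g h s := Subtype.ext (by
    show Finset.image _ _ = Finset.image _ (Finset.image _ _)
    rw [Finset.image_image]
    exact Finset.image_congr (fun x _ => by simp [Function.comp, mul_assoc]))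

/-- The `G`-lattice `D' = (ℤ[G/H] ⊗ ℤ[G]) ⊕ ℤ[G] ⊕ ℤ[Ω]`, realized concretely as
integer-valued functions (`ℤ[G/H] ⊗ ℤ[G]` is the permutation lattice on `G/H × G`, with
the diagonal `G`-action on the tensor factor). -/
abbrev Dp : Type _ := (((G ⧸ H) × G) → ℤ) × ((G → ℤ) × (Om G H l → ℤ))

/-- The injective `G`-equivariant map `f' : ℤ[G/H] → D'`, sending a coset `τ` to
`(τ ⊗ N_G, −l·N_G, −l·S_K)`, where `N_G = Σ_{g∈G} g` and `S_K = Σ_{M∈Ω} M`. -/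
noncomputable def fp : ((G ⧸ H) → ℤ) →+ Dp G H l :=
  AddMonoidHom.mk' (fun x =>
    (fun p => x p.1,
     fun _ => -(l : ℤ) * ∑ᶠ τ, x τ,
     fun _ => -(l : ℤ) * ∑ᶠ τ, x τ)) (by
    intro x y
    have hsum : ∑ᶠ τ, (x τ + y τ) = (∑ᶠ τ, x τ) + ∑ᶠ τ, y τ :=
      finsum_add_distrib (Set.toFinite _) (Set.toFinite _)
    refine Prod.ext ?_ (Prod.ext ?_ ?_) <;> funext p <;>
      simp [hsum] <;> ring)

lemma fp_apply (x : (G ⧸ H) → ℤ) :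
    fp G H l x =
      (fun p => x p.1,
       fun _ => -(l : ℤ) * ∑ᶠ τ, x τ,
       fun _ => -(l : ℤ) * ∑ᶠ τ, x τ) := rfl

lemma fp_equivariant (g : G) (x : (G ⧸ H) → ℤ) :
    fp G H l (g • x) = g • fp G H l x := by
  have hre : ∑ᶠ τ, x (g⁻¹ • τ) = ∑ᶠ τ, x τ :=
    finsum_eq_of_bijective (fun τ => g⁻¹ • τ) (MulAction.bijective g⁻¹) (fun τ => rfl)
  refine Prod.ext ?_ (Prod.ext ?_ ?_) <;> funext p <;>
    simp only [fp_apply, funAction_smul_apply, Prod.smul_fst, Prod.smul_snd, hre]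

/-- The `G`-lattice `T'`, defined as the cokernel of `f' : ℤ[G/H] → D'`. -/
noncomputable abbrev Tp := Dp G H l ⧸ (fp G H l).range

noncomputable instance : SMul G (Tp G H l) :=
  ⟨fun g => QuotientAddGroup.map _ _ (DistribMulAction.toAddMonoidHom (Dp G H l) g) (by
    rintro _ ⟨x, rfl⟩
    exact ⟨g • x, (fp_equivariant G H l g x)⟩)⟩

lemma Tp_smul_mk (g : G) (d : Dp G H l) :
    g • (QuotientAddGroup.mk d : Tp G H l) = QuotientAddGroup.mk (g • d) := rfl

/-- The `G`-action on the cokernel `T'`. -/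
noncomputable instance : DistribMulAction G (Tp G H l) where
  one_smul x := by
    induction x using QuotientAddGroup.induction_on with
    | H d => rw [Tp_smul_mk, one_smul]
  mul_smul g g' x := by
    induction x using QuotientAddGroup.induction_on with
    | H d => rw [Tp_smul_mk, Tp_smul_mk, Tp_smul_mk, mul_smul]
  smul_zero g :=
    map_zero (QuotientAddGroup.map _ _ (DistribMulAction.toAddMonoidHom (Dp G H l) g) _)
  smul_add g x y :=
    map_add (QuotientAddGroup.map _ _ (DistribMulAction.toAddMonoidHom (Dp G H l) g) _) x y

end ContextA

section Stmt4

variable (G : Type*) [Group G] [Fintype G] [DecidableEq G] (H : Subgroup G) (l : ℕ)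

/-- The `G`-lattice `S' = ℤ[G] ⊕ ℤ[Ω]`, the last two direct summands of `D'`. -/
abbrev Sp : Type _ := (G → ℤ) × (Om G H l → ℤ)

/-- The map `(D')^H → (T')^H` on `H`-invariants obtained by restricting the quotient map
`D' → T' = coker(f')`. -/
noncomputable def quotF (d : fixedBy H (Dp G H l)) : fixedBy H (Tp G H l) :=
  ⟨QuotientAddGroup.mk (d : Dp G H l), by
    intro g hg
    rw [Tp_smul_mk, d.2 g hg]⟩

/-- The map `(D')^H → (S')^H` on `H`-invariants obtained by restricting the projection
`D' → S'` onto the last two direct summands. -/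
def projF (d : fixedBy H (Dp G H l)) : fixedBy H (Sp G H l) :=
  ⟨(d : Dp G H l).2, by
    intro g hg
    have := congrArg Prod.snd (d.2 g hg)
    simpa using this⟩

end Stmt4

/-!
The kernel of `(D')^H → (T')^H` is `ℤ[G/H]`, and that of `(D')^H → (S')^H` is
`(ℤ[G/H] ⊗ ℤ[G])^H ≅ ℤ[G/H × G/H]`. Both are permutation modules of `G/H` on sets admitting an
equivariant map to `G/H`, i.e. coinduced modules, so their cohomology vanishes in positive degrees,
and the long exact sequence makes the two maps isomorphisms on `H²`. The quotient map is onto on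
`H`-invariants because `H¹(H, ℤ[G/H]) = Hom(H, ℤ[G/H]) = 0`: `H` is finite and acts trivially on
the torsion-free lattice `ℤ[G/H]`.
-/

section Cochains

variable {Γ : Type*} [Group Γ] {K M N : Type*} [AddCommGroup K] [DistribMulAction Γ K]
  [AddCommGroup M] [DistribMulAction Γ M] [AddCommGroup N] [DistribMulAction Γ N]

-- `IsTwoCocycle c` and `IsTwoCoboundary f` unfold to `∀ g h k, coboundary₂ c g h k = 0` and
-- `∃ a, ∀ g h, f g h = coboundary₁ a g h`.
def coboundary₁ (a : Γ → M) (g h : Γ) : M := g • a h - a (g * h) + a g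

def coboundary₂ (c : Γ → Γ → M) (g h k : Γ) : M :=
  g • c h k - c (g * h) k + c g (h * k) - c g h

def IsThreeCocycle (f : Γ → Γ → Γ → M) : Prop :=
  ∀ g h k m : Γ, g • f h k m - f (g * h) k m + f g (h * k) m - f g h (k * m) + f g h k = 0

def IsThreeCoboundary (f : Γ → Γ → Γ → M) : Prop :=
  ∃ c : Γ → Γ → M, ∀ g h k : Γ, f g h k = coboundary₂ c g h k

lemma isTwoCocycle_coboundary₁ (a : Γ → M) : IsTwoCocycle (coboundary₁ a) := by
  intro g h k
  simp only [coboundary₁, smul_sub, smul_add, ← mul_smul, mul_assoc]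
  abel

lemma isThreeCocycle_coboundary₂ (c : Γ → Γ → M) : IsThreeCocycle (coboundary₂ c) := by
  intro g h k m
  simp only [coboundary₂, smul_sub, smul_add, ← mul_smul, mul_assoc]
  abel

lemma coboundary₁_add (a b : Γ → M) (g h : Γ) :
    coboundary₁ (a + b) g h = coboundary₁ a g h + coboundary₁ b g h := by
  simp only [coboundary₁, Pi.add_apply, smul_add]
  abel

lemma coboundary₂_sub (c c' : Γ → Γ → M) (g h k : Γ) :
    coboundary₂ (c - c') g h k = coboundary₂ c g h k - coboundary₂ c' g h k := by
  simp only [coboundary₂, Pi.sub_apply, smul_sub]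
  abel

lemma IsTwoCocycle.sub {f f' : Γ → Γ → M} (hf : IsTwoCocycle f) (hf' : IsTwoCocycle f') :
    IsTwoCocycle (f - f') := fun g h k =>
  (coboundary₂_sub f f' g h k).trans (sub_eq_zero.mpr ((hf g h k).trans (hf' g h k).symm))

lemma map_coboundary₁ (φ : M →+[Γ] N) (a : Γ → M) (g h : Γ) :
    φ (coboundary₁ a g h) = coboundary₁ (fun x => φ (a x)) g h := by
  simp only [coboundary₁, map_add, map_sub, map_smul]

lemma map_coboundary₂ (φ : M →+[Γ] N) (c : Γ → Γ → M) (g h k : Γ) :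
    φ (coboundary₂ c g h k) = coboundary₂ (fun x y => φ (c x y)) g h k := by
  simp only [coboundary₂, map_add, map_sub, map_smul]

lemma IsTwoCocycle.of_map {φ : K →+[Γ] M} (hφ : Function.Injective φ) {c : Γ → Γ → K}
    (hc : IsTwoCocycle (fun g h => φ (c g h))) : IsTwoCocycle c := fun g h k =>
  hφ <| by rw [map_zero, ← hc g h k]; exact map_coboundary₂ φ c g h k

lemma IsThreeCocycle.of_map {φ : K →+[Γ] M} (hφ : Function.Injective φ) {f : Γ → Γ → Γ → K}
    (hf : IsThreeCocycle (fun g h k => φ (f g h k))) : IsThreeCocycle f := fun g h k m =>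
  hφ <| by rw [map_zero, ← hf g h k m]; simp only [map_add, map_sub, map_smul]

section Exact

variable {ι : K →+[Γ] M} {π : M →+[Γ] N}

theorem IsTwoCocycle.isTwoCoboundary_of_map (hι : Function.Injective ι)
    (hπ : Function.Surjective π) (hιπ : Function.Exact ι π)
    (hK : ∀ x : Γ → Γ → K, IsTwoCocycle x → IsTwoCoboundary x)
    {f : Γ → Γ → M} (hf : IsTwoCocycle f) (hb : IsTwoCoboundary (fun g h => π (f g h))) :
    IsTwoCoboundary f := by
  obtain ⟨a, ha⟩ := hb
  choose a' ha' using fun g => hπ (a g)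
  have hker : ∀ g h, π (f g h - coboundary₁ a' g h) = 0 := fun g h => by
    rw [map_sub, map_coboundary₁, sub_eq_zero]
    simp only [ha']
    exact ha g h
  choose x hx using fun g h => (hιπ _).mp (hker g h)
  have hx_cocycle : IsTwoCocycle x := IsTwoCocycle.of_map hι <| by
    simp only [hx]
    exact hf.sub (isTwoCocycle_coboundary₁ a')
  obtain ⟨b, hb⟩ := hK x hx_cocycle
  refine ⟨a' + fun g => ι (b g), fun g h => ?_⟩
  change f g h = coboundary₁ _ g h
  rw [coboundary₁_add, ← map_coboundary₁, show coboundary₁ b g h = x g h from (hb g h).symm,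
    hx, add_sub_cancel]

theorem IsTwoCocycle.exists_map_sub_isTwoCoboundary (hι : Function.Injective ι)
    (hπ : Function.Surjective π) (hιπ : Function.Exact ι π)
    (hK : ∀ y : Γ → Γ → Γ → K, IsThreeCocycle y → IsThreeCoboundary y)
    {c : Γ → Γ → N} (hc : IsTwoCocycle c) :
    ∃ f : Γ → Γ → M, IsTwoCocycle f ∧ IsTwoCoboundary (fun g h => π (f g h) - c g h) := by
  choose d hd using fun g h => hπ (c g h)
  have hker : ∀ g h k, π (coboundary₂ d g h k) = 0 := fun g h k => by
    rw [map_coboundary₂]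
    simp only [hd]
    exact hc g h k
  choose y hy using fun g h k => (hιπ _).mp (hker g h k)
  have hy_cocycle : IsThreeCocycle y := IsThreeCocycle.of_map hι <| by
    simp only [hy]
    exact isThreeCocycle_coboundary₂ d
  obtain ⟨z, hz⟩ := hK y hy_cocycle
  refine ⟨d - fun g h => ι (z g h), fun g h k => ?_, ⟨0, fun g h => ?_⟩⟩
  · change coboundary₂ _ g h k = 0
    rw [coboundary₂_sub, ← map_coboundary₂, ← hz, hy, sub_self]
  · have hιz : π (ι (z g h)) = 0 := (hιπ _).mpr ⟨_, rfl⟩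
    simp [hd, hιz]

end Exact

end Cochains

section Coinduced

variable {Γ α A : Type*} [Group Γ] [MulAction Γ α] [AddCommGroup A]
  {p : α → Γ} (hp : ∀ (g : Γ) (t : α), p (g • t) = g * p t)
include hp

-- The contracting homotopy evaluates a cochain at `(p t)⁻¹` and at the point `(p t)⁻¹ • t` of
-- the fibre `p ⁻¹' {1}`.
theorem IsTwoCocycle.isTwoCoboundary_of_equivariant {x : Γ → Γ → α → A}
    (hx : IsTwoCocycle x) : IsTwoCoboundary x := by
  refine ⟨fun h t => x (p t)⁻¹ h ((p t)⁻¹ • t), fun g h => funext fun t => ?_⟩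
  have hxt := congrFun (hx (p t)⁻¹ g h) ((p t)⁻¹ • t)
  simp only [Pi.sub_apply, Pi.add_apply, funAction_smul_apply, Pi.zero_apply, inv_inv,
    smul_inv_smul] at hxt ⊢
  rw [hp, mul_inv_rev, inv_inv, mul_smul, smul_inv_smul, ← sub_eq_zero, ← hxt]
  abel

theorem IsThreeCocycle.isThreeCoboundary_of_equivariant {y : Γ → Γ → Γ → α → A}
    (hy : IsThreeCocycle y) : IsThreeCoboundary y := by
  refine ⟨fun h k t => y (p t)⁻¹ h k ((p t)⁻¹ • t), fun g h k => funext fun t => ?_⟩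
  have hyt := congrFun (hy (p t)⁻¹ g h k) ((p t)⁻¹ • t)
  simp only [coboundary₂, Pi.sub_apply, Pi.add_apply, funAction_smul_apply, Pi.zero_apply,
    inv_inv, smul_inv_smul] at hyt ⊢
  rw [hp, mul_inv_rev, inv_inv, mul_smul, smul_inv_smul, ← sub_eq_zero, ← hyt]
  abel

end Coinduced

theorem smul_eq_self_of_smul_sub_fixed {Γ M : Type*} [Monoid Γ] [AddCommGroup M]
    [IsAddTorsionFree M] [DistribMulAction Γ M] {g : Γ} (hg : IsOfFinOrder g) {m : M}
    (hfix : g • (g • m - m) = g • m - m) : g • m = m := by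
  set s := g • m - m
  have hpow : ∀ k : ℕ, g ^ k • m = m + k • s := by
    intro k
    induction k with
    | zero => simp
    | succ k ih =>
      rw [pow_succ', mul_smul, ih, smul_add, smul_comm, hfix, succ_nsmul]
      simp only [s]
      abel
  have hs : orderOf g • s = 0 := by
    simpa [pow_orderOf_eq_one] using (hpow (orderOf g)).symm
  rw [← sub_eq_zero]
  exact nsmul_right_injective hg.orderOf_pos.ne' (hs.trans (nsmul_zero _).symm)

section FixedPoints

variable {Γ : Type*} [Group Γ] (N : Subgroup Γ) [N.Normal] {M P : Type*} [AddCommGroup M]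
  [DistribMulAction Γ M] [AddCommGroup P] [DistribMulAction Γ P]

variable {N} in
lemma smul_coset_of_mem {h : Γ} (hh : h ∈ N) (τ : Γ ⧸ N) : h • τ = τ := by
  induction τ using QuotientGroup.induction_on with
  | H a =>
    rw [MulAction.Quotient.smul_mk, smul_eq_mul, QuotientGroup.eq]
    simpa [mul_assoc] using Subgroup.Normal.conj_mem ‹_› h⁻¹ (inv_mem hh) a⁻¹

def fixedByMap (φ : M →+[Γ] P) : fixedBy N M →+[Γ ⧸ N] fixedBy N P where
  toFun m := ⟨φ (m : M), fun γ hγ => by rw [← map_smul, m.2 γ hγ]⟩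
  map_zero' := Subtype.ext (map_zero φ)
  map_add' m m' := Subtype.ext (map_add φ (m : M) m')
  map_smul' q m := by
    induction q using QuotientGroup.induction_on with
    | H γ => exact Subtype.ext (map_smul φ γ (m : M))

@[simp]
lemma fixedByMap_apply_coe (φ : M →+[Γ] P) (m : fixedBy N M) :
    (fixedByMap N φ m : P) = φ (m : M) := rfl

end FixedPoints

section Lattices

variable (G : Type*) [Group G] [Fintype G] [DecidableEq G] (H : Subgroup G) [H.Normal] (l : ℕ)

noncomputable def mkTp : Dp G H l →+[G] Tp G H l where
  toFun := QuotientAddGroup.mk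
  map_smul' g d := (Tp_smul_mk G H l g d).symm
  map_zero' := rfl
  map_add' _ _ := rfl

def sndSp : Dp G H l →+[G] Sp G H l where
  toFun := Prod.snd
  map_smul' _ _ := rfl
  map_zero' := rfl
  map_add' _ _ := rfl

lemma fp_mem_fixedBy (x : (G ⧸ H) → ℤ) : fp G H l x ∈ fixedBy H (Dp G H l) := fun h hh => by
  rw [← fp_equivariant]
  congr 1
  funext τ
  rw [funAction_smul_apply, smul_coset_of_mem (inv_mem hh)]

noncomputable def fpFixed : ((G ⧸ H) → ℤ) →+[G ⧸ H] fixedBy H (Dp G H l) where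
  toFun x := ⟨fp G H l x, fp_mem_fixedBy G H l x⟩
  map_zero' := Subtype.ext (map_zero _)
  map_add' x y := Subtype.ext (map_add _ x y)
  map_smul' q x := by
    induction q using QuotientGroup.induction_on with
    | H g =>
      exact Subtype.ext (fp_equivariant G H l g x)

lemma fpFixed_injective : Function.Injective (fpFixed G H l) := fun _ _ hxy =>
  funext fun τ => congrFun (congrArg (fun m : fixedBy H (Dp G H l) => (m : Dp G H l).1) hxy) (τ, 1)

lemma exact_fpFixed_mkTp : Function.Exact (fpFixed G H l) (fixedByMap H (mkTp G H l)) := by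
  intro m
  rw [← (Subtype.coe_injective).eq_iff]
  simp only [fixedByMap_apply_coe, AddSubgroup.coe_zero]
  exact (QuotientAddGroup.eq_zero_iff _).trans
    ⟨fun ⟨x, hx⟩ => ⟨x, Subtype.ext hx⟩, fun ⟨x, hx⟩ => ⟨x, congrArg Subtype.val hx⟩⟩

def tensorFixed : ((G ⧸ H) × (G ⧸ H) → ℤ) →+[G ⧸ H] fixedBy H (Dp G H l) where
  toFun u := ⟨(fun p => u (p.1, p.2), 0), fun h hh => by
    refine Prod.ext (funext fun p => ?_) (smul_zero h)
    simp only [Prod.smul_fst, funAction_smul_apply, Prod.smul_snd, smul_eq_mul,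
      smul_coset_of_mem (inv_mem hh), QuotientGroup.mk_mul, QuotientGroup.mk_inv,
      (QuotientGroup.eq_one_iff h).mpr hh, inv_one, one_mul]⟩
  map_zero' := rfl
  map_add' _ _ := Subtype.ext (Prod.ext rfl (add_zero 0).symm)
  map_smul' q u := by
    induction q using QuotientGroup.induction_on with
    | H g =>
      refine Subtype.ext (Prod.ext (funext fun p => ?_) (smul_zero g).symm)
      induction p.1 using QuotientGroup.induction_on with
      | H a => rfl

lemma tensorFixed_injective : Function.Injective (tensorFixed G H l) := fun u v huv => by
  funext ⟨τ, σ⟩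
  induction σ using QuotientGroup.induction_on with
  | H a => exact congrFun (congrArg (fun m : fixedBy H (Dp G H l) => (m : Dp G H l).1) huv) (τ, a)

lemma fixedBy_fst_mul_mem {m : Dp G H l} (hm : m ∈ fixedBy H (Dp G H l)) (τ : G ⧸ H) (a : G)
    {h : G} (hh : h ∈ H) : m.1 (τ, a * h) = m.1 (τ, a) := by
  have hconj : a * h * a⁻¹ ∈ H := Subgroup.Normal.conj_mem ‹_› h hh a
  have := congrFun (congrArg Prod.fst (hm _ (inv_mem hconj))) (τ, a)
  simpa only [Prod.smul_fst, funAction_smul_apply, inv_inv, Prod.smul_mk, smul_eq_mul,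
    smul_coset_of_mem hconj, inv_mul_cancel_right] using this

lemma exact_tensorFixed_sndSp :
    Function.Exact (tensorFixed G H l) (fixedByMap H (sndSp G H l)) := by
  intro m
  rw [← (Subtype.coe_injective).eq_iff]
  simp only [fixedByMap_apply_coe, AddSubgroup.coe_zero]
  refine ⟨fun hm => ⟨fun p => (m : Dp G H l).1 (p.1, p.2.out),
    Subtype.ext (Prod.ext ?_ hm.symm)⟩, fun ⟨u, hu⟩ => hu ▸ rfl⟩
  funext ⟨τ, a⟩
  obtain ⟨⟨h, hh⟩, hout⟩ := QuotientGroup.mk_out_eq_mul H a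
  change (m : Dp G H l).1 (τ, (a : G ⧸ H).out) = _
  rw [hout]
  exact fixedBy_fst_mul_mem G H l m.2 τ a hh

lemma fixedByMap_sndSp_surjective : Function.Surjective (fixedByMap H (sndSp G H l)) :=
  fun s => ⟨⟨(0, s), fun h hh => Prod.ext (smul_zero h) (s.2 h hh)⟩, rfl⟩

lemma quotF_surjective : Function.Surjective (quotF G H l) := by
  rintro ⟨t, ht⟩
  induction t using QuotientAddGroup.induction_on with
  | H d =>
    refine ⟨⟨d, fun h hh => smul_eq_self_of_smul_sub_fixed (isOfFinOrder_of_finite h) ?_⟩, rfl⟩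
    obtain ⟨x, hx⟩ :=
      (QuotientAddGroup.eq_iff_sub_mem).mp ((Tp_smul_mk G H l h d).symm.trans (ht h hh))
    rw [← hx]
    exact fp_mem_fixedBy G H l x h hh

end Lattices

theorem stmt4_general (G : Type) [Group G] [Fintype G] [DecidableEq G]
    (H : Subgroup G) [H.Normal] (l : ℕ) :
    Function.Surjective (quotF G H l) ∧
    ((∀ f : (G ⧸ H) → (G ⧸ H) → fixedBy H (Dp G H l), IsTwoCocycle f →
        IsTwoCoboundary (fun a b => quotF G H l (f a b)) → IsTwoCoboundary f) ∧
      (∀ c : (G ⧸ H) → (G ⧸ H) → fixedBy H (Tp G H l), IsTwoCocycle c →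
        ∃ f : (G ⧸ H) → (G ⧸ H) → fixedBy H (Dp G H l), IsTwoCocycle f ∧
          IsTwoCoboundary (fun a b => quotF G H l (f a b) - c a b))) ∧
    ((∀ f : (G ⧸ H) → (G ⧸ H) → fixedBy H (Dp G H l), IsTwoCocycle f →
        IsTwoCoboundary (fun a b => projF G H l (f a b)) → IsTwoCoboundary f) ∧
      (∀ c : (G ⧸ H) → (G ⧸ H) → fixedBy H (Sp G H l), IsTwoCocycle c →
        ∃ f : (G ⧸ H) → (G ⧸ H) → fixedBy H (Dp G H l), IsTwoCocycle f ∧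
          IsTwoCoboundary (fun a b => projF G H l (f a b) - c a b))) := by
  have hquot : Function.Surjective (fixedByMap H (mkTp G H l)) := quotF_surjective G H l
  have hproj := fixedByMap_sndSp_surjective G H l
  have hι₁ := fpFixed_injective G H l
  have hι₂ := tensorFixed_injective G H l
  have hexact₁ := exact_fpFixed_mkTp G H l
  have hexact₂ := exact_tensorFixed_sndSp G H l
  have hid : ∀ (g t : G ⧸ H), id (g • t) = g * id t := fun _ _ => rfl
  have hsnd : ∀ (g : G ⧸ H) (t : (G ⧸ H) × (G ⧸ H)), (g • t).2 = g * t.2 := fun _ _ => rfl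
  exact ⟨hquot,
    ⟨fun f hf => hf.isTwoCoboundary_of_map hι₁ hquot hexact₁
        fun _ hx => hx.isTwoCoboundary_of_equivariant hid,
      fun c hc => hc.exists_map_sub_isTwoCoboundary hι₁ hquot hexact₁
        fun _ hy => hy.isThreeCoboundary_of_equivariant hid⟩,
    ⟨fun f hf => hf.isTwoCoboundary_of_map hι₂ hproj hexact₂
        fun _ hx => hx.isTwoCoboundary_of_equivariant hsnd,
      fun c hc => hc.exists_map_sub_isTwoCoboundary hι₂ hproj hexact₂
        fun _ hy => hy.isThreeCoboundary_of_equivariant hsnd⟩⟩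

/-- With `G` a finite group of order `n`, `H` a normal subgroup, `l > 0`,
`e' = gcd(n, l·[G:H])`, `n ∤ l·[G:H]`, `T' = coker(f' : ℤ[G/H] → D')` and
`S' = ℤ[G] ⊕ ℤ[Ω]`: the quotient map `D' → T'` restricts to a surjection
`(D')^H → (T')^H` on `H`-invariants, and this map together with the projection
`(D')^H → (S')^H` induce isomorphisms
`H²(G/H, (T')^H) ≅ H²(G/H, (D')^H) ≅ H²(G/H, (S')^H)`.  (The bijectivity of the two
induced maps on `H²` is expressed at the level of 2-cocycles: injectivity says a cocycle
whose image is a coboundary is a coboundary; surjectivity says every cocycle is, up to a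
coboundary, the image of a cocycle.) -/
theorem stmt4 (G : Type) [Group G] [Fintype G] [DecidableEq G]
    (H : Subgroup G) [H.Normal] (l : ℕ) (hl : 0 < l)
    (hndvd : ¬ (Fintype.card G ∣ l * H.index)) :
    Function.Surjective (quotF G H l) ∧
    ((∀ f : (G ⧸ H) → (G ⧸ H) → fixedBy H (Dp G H l), IsTwoCocycle f →
        IsTwoCoboundary (fun a b => quotF G H l (f a b)) → IsTwoCoboundary f) ∧
      (∀ c : (G ⧸ H) → (G ⧸ H) → fixedBy H (Tp G H l), IsTwoCocycle c →
        ∃ f : (G ⧸ H) → (G ⧸ H) → fixedBy H (Dp G H l), IsTwoCocycle f ∧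
          IsTwoCoboundary (fun a b => quotF G H l (f a b) - c a b))) ∧
    ((∀ f : (G ⧸ H) → (G ⧸ H) → fixedBy H (Dp G H l), IsTwoCocycle f →
        IsTwoCoboundary (fun a b => projF G H l (f a b)) → IsTwoCoboundary f) ∧
      (∀ c : (G ⧸ H) → (G ⧸ H) → fixedBy H (Sp G H l), IsTwoCocycle c →
        ∃ f : (G ⧸ H) → (G ⧸ H) → fixedBy H (Dp G H l), IsTwoCocycle f ∧
          IsTwoCoboundary (fun a b => projF G H l (f a b) - c a b))) :=
  stmt4_general G H l

end Normic
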